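/- arXiv:1406.5995 — 6 statements merged into one kernel-verified Lean document; each statement's English description precedes it below -/
import Mathlib

section
/- For every natural number n there exists a polynomial P_n in n variables X_1, …, X_n with integer coefficients, whose term of maximal degree in X_1 is exactly X_1^n (i.e., P_n − X_1^n has degree in X_1 strictly less than n), such that for every real number x that is not a nonpositive integer, Γ^{(n)}(x) = Γ(x) · P_n(Ψ(x), Ψ^{(1)}(x), …, Ψ^{(n−1)}(x)), where Γ^{(n)} denotes the n-th derivative of the Gamma function and Ψ^{(i)} the i-th derivative of the Digamma function. -/
/-!
Since `Γ' = Γ Ψ`, differentiating `Γ(x) P(Ψ(x), …, Ψ⁽ⁿ⁻¹⁾(x))` gives `Γ(x) Q(Ψ(x), …, Ψ⁽ⁿ⁾(x))`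
with `Q = X₀ P + D P`, where `D` is the derivation of `ℤ[X₀, X₁, …]` sending `Xᵢ` to `Xᵢ₊₁`.
Starting from `P₀ = 1`, this produces polynomials `Pₙ` which are weighted homogeneous of degree
`n` when `Xᵢ` has weight `i + 1`; in particular only `X₀, …, Xₙ₋₁` occur in `Pₙ`. Moreover
`D` takes values in the ideal `(X₁, X₂, …)`, so `Pₙ - X₀ⁿ` lies in it, and a monomial of weight
`n` containing some `Xᵢ` with `i ≠ 0` has degree `< n` in `X₀`.
-/

noncomputable def Digamma (x : ℝ) : ℝ := deriv Real.Gamma x / Real.Gamma x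

open MvPolynomial

namespace Finsupp

theorem apply_add_le_weight {σ : Type*} {w : σ → ℕ} {d : σ →₀ ℕ} {i j : σ} (hij : i ≠ j)
    (hj : w j ≠ 0) (hi : d i ≠ 0) : d j + w i ≤ weight w d := by
  rw [← weight_sub_single_add hi]
  have := le_weight w hj (d - single i 1)
  simp only [tsub_apply, single_eq_of_ne' hij, tsub_zero] at this
  omega

end Finsupp

namespace MvPolynomial

variable {σ R M : Type*} [CommSemiring R]

theorem IsWeightedHomogeneous.le_of_mem_vars [AddCommMonoid M] [PartialOrder M]
    [IsOrderedAddMonoid M] [CanonicallyOrderedAdd M] {w : σ → M} {m : M} {p : MvPolynomial σ R}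
    (hp : p.IsWeightedHomogeneous w m) {i : σ} (hi : i ∈ p.vars) : w i ≤ m := by
  obtain ⟨d, hd, hid⟩ := (mem_vars_iff_mem_support i).1 hi
  rw [← hp (mem_support_iff.1 hd)]
  exact Finsupp.le_weight_of_ne_zero' w (Finsupp.mem_support_iff.1 hid)

theorem IsWeightedHomogeneous.mkDerivation [AddCommMonoid M] {w : σ → M}
    {f : σ → MvPolynomial σ R} {k : M} (hf : ∀ i, (f i).IsWeightedHomogeneous w (w i + k))
    {m : M} {p : MvPolynomial σ R} (hp : p.IsWeightedHomogeneous w m) :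
    (mkDerivation R f p).IsWeightedHomogeneous w (m + k) := by
  induction hp using IsWeightedHomogeneous.induction_on with
  | zero => simpa using isWeightedHomogeneous_zero R w _
  | add p q _ _ hp hq => simpa using hp.add hq
  | monomial d r hd =>
    rw [mkDerivation_monomial, Finsupp.sum, smul_eq_C_mul, ← hd]
    refine (IsWeightedHomogeneous.sum _ _ _ fun i hi => ?_).C_mul r
    rw [smul_eq_mul, ← Finsupp.weight_sub_single_add (Finsupp.mem_support_iff.1 hi), add_assoc]
    exact (isWeightedHomogeneous_monomial _ _ _ rfl).mul (hf i)

theorem derivation_mem_of_X_mem (D : Derivation R (MvPolynomial σ R) (MvPolynomial σ R))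
    {I : Ideal (MvPolynomial σ R)} (h : ∀ i, D (X i) ∈ I) (p : MvPolynomial σ R) : D p ∈ I := by
  induction p using MvPolynomial.induction_on with
  | C a => simp [derivation_C]
  | add p q hp hq => simpa using I.add_mem hp hq
  | mul_X p i hp =>
    rw [D.leibniz, smul_eq_mul, smul_eq_mul]
    exact I.add_mem (I.mul_mem_left _ (h i)) (I.mul_mem_left _ hp)

variable {𝕜 : Type*} [NontriviallyNormedField 𝕜] [Algebra R 𝕜]

theorem hasDerivAt_aeval {g : σ → 𝕜 → 𝕜} {f : σ → MvPolynomial σ R} {x : 𝕜}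
    (hg : ∀ i, HasDerivAt (g i) (aeval (g · x) (f i)) x) (p : MvPolynomial σ R) :
    HasDerivAt (fun y => aeval (g · y) p) (aeval (g · x) (mkDerivation R f p)) x := by
  induction p using MvPolynomial.induction_on with
  | C a => simpa [derivation_C] using hasDerivAt_const x (algebraMap R 𝕜 a)
  | add p q hp hq => simpa using hp.fun_add hq
  | mul_X p i hp =>
    have h : HasDerivAt (fun y => aeval (g · y) (p * X i))
        (aeval (g · x) (mkDerivation R f p) * g i x + aeval (g · x) p * aeval (g · x) (f i)) x := by
      simp only [map_mul, aeval_X]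
      exact hp.mul (hg i)
    convert h using 1
    rw [Derivation.leibniz, mkDerivation_X, smul_eq_mul, smul_eq_mul]
    simp only [map_add, map_mul, aeval_X]
    ring

end MvPolynomial

noncomputable def gammaDerivPoly : ℕ → MvPolynomial ℕ ℤ
  | 0 => 1
  | n + 1 => X 0 * gammaDerivPoly n + mkDerivation ℤ (fun i => X (i + 1)) (gammaDerivPoly n)

theorem isWeightedHomogeneous_gammaDerivPoly (n : ℕ) :
    (gammaDerivPoly n).IsWeightedHomogeneous (· + 1) n := by
  induction n with
  | zero => exact isWeightedHomogeneous_one ℤ _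
  | succ n ih =>
    have hX : (X 0 * gammaDerivPoly n).IsWeightedHomogeneous (· + 1) (n + 1) := by
      convert (isWeightedHomogeneous_X ℤ _ 0).mul ih using 1
      ring
    exact hX.add (ih.mkDerivation fun i => isWeightedHomogeneous_X ℤ _ (i + 1))

theorem gammaDerivPoly_sub_X_pow_mem (n : ℕ) :
    gammaDerivPoly n - X 0 ^ n ∈ Ideal.span (X '' {i | i ≠ 0}) := by
  induction n with
  | zero => simp [gammaDerivPoly]
  | succ n ih =>
    have hD := derivation_mem_of_X_mem (mkDerivation ℤ fun i => (X (i + 1) : MvPolynomial ℕ ℤ))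
      (I := Ideal.span (X '' {i | i ≠ 0})) (fun i => Ideal.subset_span ⟨i + 1, by simp⟩)
      (gammaDerivPoly n)
    have hrec : gammaDerivPoly (n + 1) - X 0 ^ (n + 1) = X 0 * (gammaDerivPoly n - X 0 ^ n) +
        mkDerivation ℤ (fun i => X (i + 1)) (gammaDerivPoly n) := by
      rw [gammaDerivPoly]; ring
    rw [hrec]
    exact Ideal.add_mem _ (Ideal.mul_mem_left _ _ ih) hD

namespace Real

theorem analyticAt_inv_Gamma (x : ℝ) : AnalyticAt ℝ (fun y => (Gamma y)⁻¹) x := by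
  have h : (fun y : ℝ => (Gamma y)⁻¹) = fun y : ℝ => ((Complex.Gamma y)⁻¹).re := by
    ext y; simp [Complex.Gamma_ofReal]
  rw [h]
  exact (Complex.reCLM.analyticAt _).comp <|
    (Complex.differentiable_one_div_Gamma.analyticAt _).restrictScalars.comp
      (Complex.ofRealCLM.analyticAt x)

theorem analyticAt_Gamma {x : ℝ} (hx : Gamma x ≠ 0) : AnalyticAt ℝ Gamma x := by
  simpa using (analyticAt_inv_Gamma x).fun_inv (inv_ne_zero hx)

theorem isOpen_setOf_Gamma_ne_zero : IsOpen {x | Gamma x ≠ 0} := by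
  have hcont : Continuous fun y => (Gamma y)⁻¹ :=
    continuous_iff_continuousAt.2 fun x => (analyticAt_inv_Gamma x).continuousAt
  simpa using isOpen_ne_fun hcont (continuous_const (y := (0 : ℝ)))

end Real

theorem analyticAt_Digamma {x : ℝ} (hx : Real.Gamma x ≠ 0) : AnalyticAt ℝ Digamma x :=
  (Real.analyticAt_Gamma hx).deriv.div (Real.analyticAt_Gamma hx) hx

theorem hasDerivAt_Gamma {x : ℝ} (hx : Real.Gamma x ≠ 0) :
    HasDerivAt Real.Gamma (Real.Gamma x * Digamma x) x := by
  rw [Digamma, mul_div_cancel₀ _ hx]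
  exact (Real.analyticAt_Gamma hx).differentiableAt.hasDerivAt

theorem hasDerivAt_iteratedDeriv_Digamma (i : ℕ) {x : ℝ} (hx : Real.Gamma x ≠ 0) :
    HasDerivAt (iteratedDeriv i Digamma) (iteratedDeriv (i + 1) Digamma x) x := by
  rw [iteratedDeriv_succ, iteratedDeriv_eq_iterate]
  exact ((analyticAt_Digamma hx).iterated_deriv i).differentiableAt.hasDerivAt

theorem iteratedDeriv_Gamma_eq_Gamma_mul_aeval (n : ℕ) {x : ℝ} (hx : Real.Gamma x ≠ 0) :
    iteratedDeriv n Real.Gamma x =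
      Real.Gamma x * aeval (fun i => iteratedDeriv i Digamma x) (gammaDerivPoly n) := by
  induction n generalizing x with
  | zero => simp [gammaDerivPoly]
  | succ n ih =>
    have hP := hasDerivAt_aeval (f := fun i => X (i + 1))
      (g := fun i => iteratedDeriv i Digamma) (fun i => by
        simpa using hasDerivAt_iteratedDeriv_Digamma i hx) (gammaDerivPoly n)
    have hU : iteratedDeriv n Real.Gamma =ᶠ[nhds x]
        fun y => Real.Gamma y * aeval (fun i => iteratedDeriv i Digamma y) (gammaDerivPoly n) :=
      Filter.eventually_of_mem (Real.isOpen_setOf_Gamma_ne_zero.mem_nhds hx) fun y hy => ih hy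
    rw [iteratedDeriv_succ, hU.deriv_eq, ((hasDerivAt_Gamma hx).fun_mul hP).deriv, gammaDerivPoly]
    simp only [map_add, map_mul, aeval_X, iteratedDeriv_zero]
    ring

/-- For every `n` there is a polynomial `P` with integer coefficients in the variables
`X 0, …, X (n-1)`, whose term of maximal degree in `X 0` is exactly `(X 0)^n` (i.e. every
monomial of `P - (X 0)^n` has degree `< n` in `X 0`), such that for every real `x` that is not a
nonpositive integer, `Γ⁽ⁿ⁾(x) = Γ(x) · P(Ψ(x), Ψ⁽¹⁾(x), …, Ψ⁽ⁿ⁻¹⁾(x))`. -/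
theorem iteratedDeriv_Gamma_eq_Gamma_mul_poly_digamma (n : ℕ) :
    ∃ P : MvPolynomial ℕ ℤ,
      P.vars ⊆ Finset.range n ∧
      (∀ d ∈ (P - MvPolynomial.X 0 ^ n).support, d 0 < n) ∧
      ∀ x : ℝ, (∀ m : ℕ, x ≠ -(m : ℝ)) →
        iteratedDeriv n Real.Gamma x =
          Real.Gamma x * MvPolynomial.aeval (fun i : ℕ => iteratedDeriv i Digamma x) P := by
  have hP := isWeightedHomogeneous_gammaDerivPoly n
  refine ⟨gammaDerivPoly n, fun i hi => ?_, fun d hd => ?_, fun x hx =>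
    iteratedDeriv_Gamma_eq_Gamma_mul_aeval n (Real.Gamma_ne_zero hx)⟩
  · simpa using hP.le_of_mem_vars hi
  · obtain ⟨i, hi, hdi⟩ := mem_ideal_span_X_image.1 (gammaDerivPoly_sub_X_pow_mem n) d hd
    have hX : (X 0 ^ n : MvPolynomial ℕ ℤ).IsWeightedHomogeneous (· + 1) n := by
      convert (isWeightedHomogeneous_X ℤ (· + 1) 0).pow n using 1
      simp
    have hd_weight := hP.sub hX (mem_support_iff.1 hd)
    have := Finsupp.apply_add_le_weight (w := (· + 1)) hi one_ne_zero hdi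
    omega
end

section
/- For n ≥ 0 let Q_n(z) = Σ_{k=0}^n (−1)^{n−k} · C(2n−k, n) · z^k/k!, where C(·,·) denotes the binomial coefficient. Then for every z ∈ ℂ and every x ∈ ℂ with |x| < 1/4, the series Σ_{n=0}^∞ Q_n(z) x^n converges and Σ_{n=0}^∞ Q_n(z) x^n = e^{−z/2} · (1+4x)^{−1/2} · e^{(z/2)(1+4x)^{1/2}}, where (1+4x)^{1/2} denotes the principal branch of the square root (which is well defined since Re(1+4x) > 0). -/
/-- The denominator `Q_n(z) = ∑_{k=0}^n (−1)^{n−k} C(2n−k, n) z^k/k!` of the diagonal Padé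
approximant to `e^z`. -/
noncomputable def padeQ (n : ℕ) (z : ℂ) : ℂ :=
  ∑ k ∈ Finset.range (n + 1),
    (-1 : ℂ) ^ (n - k) * (Nat.choose (2 * n - k) n : ℂ) * z ^ k / (Nat.factorial k : ℂ)

/-!
Writing `n = k + m`, `Q_n(z) xⁿ = ∑_{k+m=n} (zx)^k/k! · C(2m+k, m) (-x)^m`, and this double
series converges absolutely for `|x| < 1/4`. For fixed `k` the inner series is the classical
`S_k(t) = ∑_m C(2m+k, m) t^m = c(t)^k / √(1-4t)`, where `c(t) = 2/(1+√(1-4t))` is the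
generating function of the Catalan numbers: `S_0` is the binomial series of `(1-4t)^(-1/2)`, and
Pascal's rule gives `S_0 = 1 + 2t S_1` and `S_{k+1} - S_k = t S_{k+2}`, a recurrence also
satisfied by `S_0 c^k` because `c = 1 + t c²`. Summing over `k` leaves `(1+4x)^(-1/2) exp(zx c(-x))`, and
`zx c(-x) = (z/2)(√(1+4x) - 1)`.
-/

open Finset

theorem Ring.choose_succ_right_eq {K : Type*} [Field K] [CharZero K] (a : K) (n : ℕ) :
    Ring.choose a (n + 1) * (n + 1) = Ring.choose a n * (a - n) := by
  have h := Ring.descPochhammer_eq_factorial_smul_choose a (n + 1)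
  rw [descPochhammer_succ_right, Polynomial.smeval_mul,
    Ring.descPochhammer_eq_factorial_smul_choose] at h
  simp only [Polynomial.smeval_sub, Polynomial.smeval_X, Polynomial.smeval_natCast,
    Nat.factorial_succ, nsmul_eq_mul, pow_one, pow_zero] at h
  push_cast at h
  apply mul_left_cancel₀ (Nat.cast_ne_zero.mpr n.factorial_ne_zero : (n.factorial : K) ≠ 0)
  linear_combination -h

theorem Ring.choose_neg_inv_two_mul_neg_four_pow {K : Type*} [Field K] [CharZero K] (n : ℕ) :
    Ring.choose (-2⁻¹ : K) n * (-4) ^ n = n.centralBinom := by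
  induction n with
  | zero => simp
  | succ n ih =>
    have h : ((n + 1 : ℕ) : K) * (n + 1).centralBinom = 2 * (2 * n + 1) * n.centralBinom := by
      exact_mod_cast Nat.succ_mul_centralBinom_succ n
    push_cast at h
    apply mul_left_cancel₀ (Nat.cast_add_one_ne_zero n : (n + 1 : K) ≠ 0)
    rw [h, ← ih, pow_succ]
    linear_combination (-4 * (-4) ^ n) * Ring.choose_succ_right_eq (-2⁻¹ : K) n

theorem hasSum_centralBinom_mul_pow {t : ℂ} (ht : ‖t‖ < 1 / 4) :
    HasSum (fun n ↦ (n.centralBinom : ℂ) * t ^ n) ((1 - 4 * t) ^ (-2⁻¹ : ℂ)) := by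
  have hu : -4 * t ∈ Metric.eball (0 : ℂ) 1 := by
    rw [← ENNReal.ofReal_one, Metric.eball_ofReal, mem_ball_zero_iff, norm_mul]
    norm_num
    linarith
  have h := (Complex.one_add_cpow_hasFPowerSeriesOnBall_zero (a := -2⁻¹)).hasSum hu
  simp only [binomialSeries, FormalMultilinearSeries.ofScalars_apply_eq, zero_add, smul_eq_mul,
    mul_pow, ← mul_assoc, Ring.choose_neg_inv_two_mul_neg_four_pow] at h
  rwa [neg_mul, ← sub_eq_add_neg] at h

theorem norm_choose_two_mul_add_mul_pow_le (k m : ℕ) (t : ℂ) :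
    ‖((2 * m + k).choose m : ℂ) * t ^ m‖ ≤ 2 ^ k * (4 * ‖t‖) ^ m := by
  have h : ((2 * m + k).choose m : ℝ) ≤ 2 ^ k * 4 ^ m := by
    calc ((2 * m + k).choose m : ℝ) ≤ (2 ^ (2 * m + k) : ℕ) := by
          exact_mod_cast Nat.choose_le_two_pow _ _
      _ = 2 ^ k * 4 ^ m := by push_cast; rw [pow_add, pow_mul]; ring
  rw [norm_mul, norm_pow, Complex.norm_natCast, mul_pow, ← mul_assoc]
  gcongr

theorem summable_choose_two_mul_add_mul_pow (k : ℕ) {t : ℂ} (ht : ‖t‖ < 1 / 4) :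
    Summable (fun m ↦ ((2 * m + k).choose m : ℂ) * t ^ m) := by
  refine Summable.of_norm_bounded ?_ (norm_choose_two_mul_add_mul_pow_le k · t)
  exact (summable_geometric_of_lt_one (by positivity) (by linarith)).mul_left _

noncomputable def chooseSeries (k : ℕ) (t : ℂ) : ℂ :=
  ∑' m, ((2 * m + k).choose m : ℂ) * t ^ m

theorem chooseSeries_eq_one_add (k : ℕ) {t : ℂ} (ht : ‖t‖ < 1 / 4) :
    chooseSeries k t = 1 + ∑' m, ((2 * (m + 1) + k).choose (m + 1) : ℂ) * t ^ (m + 1) := by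
  rw [chooseSeries, (summable_choose_two_mul_add_mul_pow k ht).tsum_eq_zero_add]
  simp

theorem chooseSeries_zero_eq_one_add_mul {t : ℂ} (ht : ‖t‖ < 1 / 4) :
    chooseSeries 0 t = 1 + 2 * t * chooseSeries 1 t := by
  have hchoose (m : ℕ) : (2 * (m + 1) + 0).choose (m + 1) = 2 * (2 * m + 1).choose m := by
    rw [add_zero, show 2 * (m + 1) = 2 * m + 1 + 1 by ring, Nat.choose_succ_succ,
      Nat.choose_symm_half]
    ring
  rw [chooseSeries_eq_one_add 0 ht, chooseSeries, ← tsum_mul_left]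
  congr 1
  refine tsum_congr fun m ↦ ?_
  rw [hchoose]
  push_cast
  ring

theorem chooseSeries_succ_sub_chooseSeries (k : ℕ) {t : ℂ} (ht : ‖t‖ < 1 / 4) :
    chooseSeries (k + 1) t - chooseSeries k t = t * chooseSeries (k + 2) t := by
  have hpascal (m : ℕ) : (2 * (m + 1) + (k + 1)).choose (m + 1) =
      (2 * m + (k + 2)).choose m + (2 * (m + 1) + k).choose (m + 1) := by
    rw [show 2 * (m + 1) + (k + 1) = 2 * m + (k + 2) + 1 by ring,
      show 2 * (m + 1) + k = 2 * m + (k + 2) by ring, Nat.choose_succ_succ]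
  have hshift : Summable fun m ↦ ((2 * (m + 1) + k).choose (m + 1) : ℂ) * t ^ (m + 1) :=
    (summable_nat_add_iff 1).mpr (summable_choose_two_mul_add_mul_pow k ht)
  have hsummable : Summable fun m ↦ t * (((2 * m + (k + 2)).choose m : ℂ) * t ^ m) :=
    (summable_choose_two_mul_add_mul_pow (k + 2) ht).mul_left t
  have hsplit : ∑' m, ((2 * (m + 1) + (k + 1)).choose (m + 1) : ℂ) * t ^ (m + 1) =
      ∑' m, t * (((2 * m + (k + 2)).choose m : ℂ) * t ^ m) +
        ∑' m, ((2 * (m + 1) + k).choose (m + 1) : ℂ) * t ^ (m + 1) := by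
    rw [← hsummable.tsum_add hshift]
    refine tsum_congr fun m ↦ ?_
    rw [hpascal]
    push_cast
    ring
  rw [chooseSeries_eq_one_add (k + 1) ht, chooseSeries_eq_one_add k ht, chooseSeries,
    ← tsum_mul_left, hsplit]
  ring

theorem eq_mul_pow_of_recurrence {K : Type*} [Field K] [NeZero (2 : K)] {S : ℕ → K} {t B c : K}
    (ht : t ≠ 0) (h₀ : S 0 = B) (h₁ : S 0 = 1 + 2 * t * S 1)
    (hS : ∀ k, S (k + 1) - S k = t * S (k + 2))
    (hB : B = 1 + 2 * t * B * c) (hc : c = 1 + t * c ^ 2) (k : ℕ) : S k = B * c ^ k := by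
  induction k using Nat.twoStepInduction with
  | zero => simpa using h₀
  | one =>
    apply mul_left_cancel₀ (mul_ne_zero two_ne_zero ht)
    linear_combination h₀ - h₁ + hB
  | more k ih₀ ih₁ =>
    apply mul_left_cancel₀ ht
    linear_combination -(hS k) + ih₁ - ih₀ + B * c ^ k * hc

theorem Complex.one_add_cpow_inv_two_ne_zero (w : ℂ) : 1 + w ^ (2⁻¹ : ℂ) ≠ 0 := by
  refine fun h ↦ absurd (congrArg Complex.re h) ?_
  rw [Complex.add_re, Complex.one_re, Complex.cpow_inv_two_re, Complex.zero_re]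
  positivity

theorem hasSum_choose_two_mul_add_mul_pow (k : ℕ) {t : ℂ} (ht : ‖t‖ < 1 / 4) :
    HasSum (fun m ↦ ((2 * m + k).choose m : ℂ) * t ^ m)
      ((1 - 4 * t) ^ (-2⁻¹ : ℂ) * (2 / (1 + (1 - 4 * t) ^ (2⁻¹ : ℂ))) ^ k) := by
  rcases eq_or_ne t 0 with rfl | ht₀
  · convert hasSum_single (f := fun m ↦ ((2 * m + k).choose m : ℂ) * (0 : ℂ) ^ m) 0
      (fun m hm ↦ by simp [hm]) using 1
    norm_num
  set s := (1 - 4 * t) ^ (2⁻¹ : ℂ)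
  have hs : s ^ 2 = 1 - 4 * t := Complex.cpow_ofNat_inv_pow _ 2
  have hs₀ : s ≠ 0 := by
    rintro h
    have h4t : ‖4 * t‖ = 1 := by rw [show 4 * t = 1 - s ^ 2 by rw [hs]; ring, h]; simp
    rw [norm_mul, Complex.norm_ofNat] at h4t
    linarith
  have hs₁ : 1 + s ≠ 0 := Complex.one_add_cpow_inv_two_ne_zero _
  have hB : (1 - 4 * t) ^ (-2⁻¹ : ℂ) = s⁻¹ := Complex.cpow_neg _ _
  have hS : ∀ k, chooseSeries k t = s⁻¹ * (2 / (1 + s)) ^ k := by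
    refine eq_mul_pow_of_recurrence ht₀ ?_ (chooseSeries_zero_eq_one_add_mul ht)
      (chooseSeries_succ_sub_chooseSeries · ht) ?_ ?_
    · rw [← hB, ← (hasSum_centralBinom_mul_pow ht).tsum_eq, chooseSeries]
      simp [Nat.centralBinom_eq_two_mul_choose]
    · field_simp
      linear_combination -hs
    · field_simp
      linear_combination -hs
  rw [hB, ← hS k]
  exact (summable_choose_two_mul_add_mul_pow k ht).hasSum

theorem HasSum.sum_antidiagonal {α A : Type*} [AddCommMonoid α] [TopologicalSpace α]
    [ContinuousAdd α] [RegularSpace α] [AddMonoid A] [HasAntidiagonal A] {f : A × A → α}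
    {a : α} (h : HasSum f a) : HasSum (fun n ↦ ∑ p ∈ antidiagonal n, f p) a := by
  refine (HasAntidiagonal.sigmaAntidiagonalEquivProd.hasSum_iff.mpr h).sigma fun n ↦ ?_
  rw [← sum_coe_sort]
  exact hasSum_fintype _

noncomputable def padeTerm (z x : ℂ) (p : ℕ × ℕ) : ℂ :=
  (z * x) ^ p.1 / p.1.factorial * (((2 * p.2 + p.1).choose p.2 : ℂ) * (-x) ^ p.2)

theorem padeQ_mul_pow_eq_sum_antidiagonal (n : ℕ) (z x : ℂ) :
    padeQ n z * x ^ n = ∑ p ∈ antidiagonal n, padeTerm z x p := by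
  rw [Nat.sum_antidiagonal_eq_sum_range_succ_mk, padeQ, sum_mul]
  refine sum_congr rfl fun k hk ↦ ?_
  have hkn : k ≤ n := Nat.lt_succ_iff.mp (mem_range.mp hk)
  have hchoose : (2 * (n - k) + k).choose (n - k) = (2 * n - k).choose n := by
    rw [show 2 * (n - k) + k = 2 * n - k by omega, ← Nat.choose_symm (by omega : n ≤ 2 * n - k),
      show 2 * n - k - n = n - k by omega]
  rw [padeTerm, hchoose, neg_pow, mul_pow, ← pow_sub_mul_pow x hkn]
  ring

theorem summable_norm_padeTerm (z : ℂ) {x : ℂ} (hx : ‖x‖ < 1 / 4) :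
    Summable fun p ↦ ‖padeTerm z x p‖ := by
  have hbound (p : ℕ × ℕ) :
      ‖padeTerm z x p‖ ≤ (2 * ‖z * x‖) ^ p.1 / p.1.factorial * (4 * ‖x‖) ^ p.2 := by
    rw [padeTerm, norm_mul, norm_div, norm_pow, Complex.norm_natCast, mul_pow, mul_div_assoc,
      mul_comm (2 ^ p.1), mul_assoc]
    gcongr
    simpa using norm_choose_two_mul_add_mul_pow_le p.1 p.2 (-x)
  refine Summable.of_nonneg_of_le (fun _ ↦ norm_nonneg _) hbound ?_
  exact (Real.summable_pow_div_factorial _).mul_of_nonneg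
    (summable_geometric_of_lt_one (by positivity) (by linarith)) (fun _ ↦ by positivity)
    (fun _ ↦ by positivity)

theorem Complex.mul_two_div_one_add_cpow_inv_two (x : ℂ) :
    x * (2 / (1 + (1 + 4 * x) ^ (2⁻¹ : ℂ))) = ((1 + 4 * x) ^ (2⁻¹ : ℂ) - 1) / 2 := by
  set s := (1 + 4 * x) ^ (2⁻¹ : ℂ)
  have hs : s ^ 2 = 1 + 4 * x := Complex.cpow_ofNat_inv_pow _ 2
  have hs₁ : 1 + s ≠ 0 := Complex.one_add_cpow_inv_two_ne_zero _
  field_simp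
  linear_combination -hs

theorem hasSum_padeTerm (z : ℂ) {x : ℂ} (hx : ‖x‖ < 1 / 4) :
    HasSum (padeTerm z x)
      ((1 + 4 * x) ^ (-2⁻¹ : ℂ) *
        Complex.exp (z * x * (2 / (1 + (1 + 4 * x) ^ (2⁻¹ : ℂ))))) := by
  set B := (1 + 4 * x) ^ (-2⁻¹ : ℂ)
  set c := 2 / (1 + (1 + 4 * x) ^ (2⁻¹ : ℂ))
  have hfiber (k : ℕ) : HasSum (fun m ↦ padeTerm z x (k, m))
      ((z * x) ^ k / k.factorial * (B * c ^ k)) := by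
    have h := hasSum_choose_two_mul_add_mul_pow k (t := -x) (by rwa [norm_neg])
    rw [mul_neg, sub_neg_eq_add] at h
    exact h.mul_left ((z * x) ^ k / k.factorial)
  have hexp : HasSum (fun k ↦ (z * x) ^ k / k.factorial * (B * c ^ k))
      (B * Complex.exp (z * x * c)) := by
    have hterm : (fun k ↦ (z * x) ^ k / k.factorial * (B * c ^ k)) =
        fun k ↦ B * ((z * x * c) ^ k / k.factorial) := by
      funext k
      ring
    rw [hterm, Complex.exp_eq_exp_ℂ]
    exact (NormedSpace.expSeries_div_hasSum_exp _).mul_left B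
  have h := (summable_norm_padeTerm z hx).of_norm.hasSum
  rwa [(h.prod_fiberwise hfiber).unique hexp] at h

/-- Generating function of the Padé denominators: for `|x| < 1/4`,
`∑ Q_n(z) xⁿ = e^{−z/2} (1+4x)^{−1/2} e^{(z/2)(1+4x)^{1/2}}` (principal branch powers). -/
theorem padeQ_generating_function (z x : ℂ) (hx : ‖x‖ < 1 / 4) :
    HasSum (fun n : ℕ => padeQ n z * x ^ n)
      (Complex.exp (-z / 2) * (1 + 4 * x) ^ (-(1 : ℂ) / 2) *
        Complex.exp (z / 2 * (1 + 4 * x) ^ ((1 : ℂ) / 2))) := by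
  simp_rw [padeQ_mul_pow_eq_sum_antidiagonal]
  convert (hasSum_padeTerm z hx).sum_antidiagonal using 1
  rw [neg_div 2 (1 : ℂ), one_div, mul_assoc z, Complex.mul_two_div_one_add_cpow_inv_two,
    mul_right_comm, ← Complex.exp_add, mul_comm]
  congr 2
  ring
end

section
/- Let α be a rational number that is not a nonpositive integer, and let P_n(α) = Σ_{k=0}^n binom(n+α, k+α)·(−1)^k/(k!·(k+α)), where binom(n+α, k+α) = Γ(n+α+1)/(Γ(k+α+1)·(n−k)!). Then P_0(α) = 1/α, P_1(α) = (1+α+α²)/(α(α+1)), P_2(α) = (4+5α+6α²+4α³+α⁴)/(2α(α+1)(α+2)), and for every n ≥ 0: (n+3)(n+3+α)·P_{n+3}(α) − (3n²+4nα+14n+α²+9α+17)·P_{n+2}(α) + (3n+5+2α)(n+2+α)·P_{n+1}(α) − (n+2+α)(n+1+α)·P_n(α) = 0. -/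
/-- The generalized binomial coefficient `binom(n+α, k+α) = Γ(n+α+1)/(Γ(k+α+1)·(n−k)!)`. -/
noncomputable def genBinom (α : ℚ) (n k : ℕ) : ℝ :=
  Real.Gamma ((n : ℝ) + (α : ℝ) + 1) /
    (Real.Gamma ((k : ℝ) + (α : ℝ) + 1) * (Nat.factorial (n - k) : ℝ))

/-- `P_n(α) = ∑_{k=0}^n binom(n+α, k+α) (−1)^k/(k!(k+α))`. -/
noncomputable def gammaApprox (α : ℚ) (n : ℕ) : ℝ :=
  ∑ k ∈ Finset.range (n + 1),
    genBinom α n k * (-1 : ℝ) ^ k / ((Nat.factorial k : ℝ) * ((k : ℝ) + (α : ℝ)))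


/-!
Creative telescoping (Zeilberger). Let `F(n, k)` be the `k`-th summand of `P_n`, with `1/(n - k)!`
written as `1/Γ(n - k + 1)` so that `F(n, k) = 0` for `k > n`. The left-hand side of the
recurrence, applied termwise, equals `G(n, k + 1) - G(n, k)` for
`G(n, k) = -k (k + α)² / (n + 3 + α) · F(n + 3, k)`, so summing over `k < n + 4` telescopes to
`G(n, n + 4) - G(n, 0) = 0`. The termwise identity is a rational identity after division by
`F(n + 3, k)`, because `F(n, k) / F(n + 1, k)` and `F(n, k + 1) / F(n, k)` are rational in `n, k, α`.
-/

open Real Finset Nat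

lemma natCast_add_ne_zero {a : ℝ} (ha : ∀ m : ℕ, a ≠ -m) (m : ℕ) : (m : ℝ) + a ≠ 0 := by
  intro h
  exact ha m (by linarith)

lemma ne_zero_of_eq_natCast_add {a x : ℝ} (ha : ∀ m : ℕ, a ≠ -m) (m : ℕ) (hx : x = m + a) :
    x ≠ 0 :=
  hx ▸ natCast_add_ne_zero ha m

/-- Unlike `Real.Gamma_add_one`, this holds for every `s`: at `0` and at the poles both sides
vanish, by `0⁻¹ = 0`. -/
lemma Real.inv_Gamma_eq_self_mul_inv_Gamma_add_one (s : ℝ) :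
    (Gamma s)⁻¹ = s * (Gamma (s + 1))⁻¹ := by
  rcases ne_or_eq s 0 with h | rfl
  · rw [Gamma_add_one h, mul_inv, mul_inv_cancel_left₀ h]
  · rw [zero_add, Gamma_zero, inv_zero, zero_mul]

section Gamma

variable {a : ℝ} (ha : ∀ m : ℕ, a ≠ -m)
include ha

lemma Gamma_add_one_ne_zero : Gamma (a + 1) ≠ 0 :=
  Gamma_ne_zero fun m h => ha (m + 1) (by push_cast; linarith)

lemma Gamma_natCast_succ_add (n : ℕ) :
    Gamma ((n + 1 : ℕ) + a + 1) = (n + a + 1) * Gamma (n + a + 1) := by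
  rw [← Gamma_add_one (ne_zero_of_eq_natCast_add ha (n + 1) (by push_cast; ring))]
  push_cast
  ring_nf

lemma Gamma_one_add_add_one : Gamma (1 + a + 1) = (a + 1) * Gamma (a + 1) := by
  simpa using Gamma_natCast_succ_add ha 0

lemma Gamma_two_add_add_one : Gamma (2 + a + 1) = (a + 2) * (a + 1) * Gamma (a + 1) := by
  have h := Gamma_natCast_succ_add ha 1
  norm_num [Gamma_one_add_add_one ha] at h
  rw [h]
  ring

end Gamma

noncomputable def summand (a : ℝ) (n k : ℕ) : ℝ :=
  Gamma (n + a + 1) / (Gamma (k + a + 1) * Gamma ((n : ℝ) - k + 1)) * (-1) ^ k / (k ! * (k + a))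

lemma summand_eq_zero_of_lt (a : ℝ) {n k : ℕ} (h : n < k) : summand a n k = 0 := by
  obtain ⟨m, rfl⟩ := Nat.exists_eq_add_of_lt h
  have : (n : ℝ) - (n + m + 1 : ℕ) + 1 = -m := by push_cast; ring
  rw [summand, this, Gamma_neg_nat_eq_zero, mul_zero, div_zero, zero_mul, zero_div]

lemma summand_eq_of_le (α : ℚ) {n k : ℕ} (h : k ≤ n) :
    summand α n k = genBinom α n k * (-1) ^ k / (k ! * (k + α)) := by
  rw [summand, genBinom, ← Nat.cast_sub h, Gamma_nat_eq_factorial]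

lemma gammaApprox_eq_sum_summand (α : ℚ) {n N : ℕ} (h : n < N) :
    gammaApprox α n = ∑ k ∈ range N, summand α n k := by
  rw [gammaApprox]
  refine sum_subset_zero_on_sdiff (range_subset_range.2 h) (fun k hk => ?_) (fun k hk => ?_)
  · simp only [mem_sdiff, mem_range] at hk
    exact summand_eq_zero_of_lt _ (by omega)
  · exact (summand_eq_of_le α (Nat.lt_succ_iff.1 (mem_range.1 hk))).symm

noncomputable def summandCertificate (a : ℝ) (n k : ℕ) : ℝ :=
  -(k * (k + a) ^ 2) / (n + 3 + a) * summand a (n + 3) k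

section Recurrence

variable {a : ℝ} (ha : ∀ m : ℕ, a ≠ -m)
include ha

lemma summand_eq_mul_summand_succ_left (n k : ℕ) :
    summand a n k = (n - k + 1) / (n + a + 1) * summand a (n + 1) k := by
  have hn : (n : ℝ) + a + 1 ≠ 0 := ne_zero_of_eq_natCast_add ha (n + 1) (by push_cast; ring)
  have hinv := inv_Gamma_eq_self_mul_inv_Gamma_add_one ((n : ℝ) - k + 1)
  rw [show (n : ℝ) - k + 1 + 1 = (n + 1 : ℕ) - k + 1 by push_cast; ring] at hinv
  simp only [summand, div_eq_mul_inv, mul_inv, hinv, Gamma_natCast_succ_add ha]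
  field_simp

lemma summand_succ_right_eq_mul_summand (n k : ℕ) :
    summand a n (k + 1) = -((n - k) * (k + a)) / ((k + 1) * (k + 1 + a) ^ 2) * summand a n k := by
  have hk := natCast_add_ne_zero ha k
  have hk1 : (k : ℝ) + 1 + a ≠ 0 := ne_zero_of_eq_natCast_add ha (k + 1) (by push_cast; ring)
  have hk1' : (k : ℝ) + a + 1 ≠ 0 := ne_zero_of_eq_natCast_add ha (k + 1) (by push_cast; ring)
  have hinv := inv_Gamma_eq_self_mul_inv_Gamma_add_one ((n : ℝ) - (k + 1 : ℕ) + 1)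
  rw [show (n : ℝ) - (k + 1 : ℕ) + 1 + 1 = n - k + 1 by push_cast; ring] at hinv
  simp only [summand, div_eq_mul_inv, mul_inv, hinv, Gamma_natCast_succ_add ha, factorial_succ,
    pow_succ (-1 : ℝ) k]
  push_cast
  generalize (Gamma (k + a + 1))⁻¹ = x
  generalize (Gamma (n - k + 1))⁻¹ = y
  field_simp
  ring

lemma summand_recurrence_eq_certificate_sub (n k : ℕ) :
    (n + 3) * (n + 3 + a) * summand a (n + 3) k
        - (3 * n ^ 2 + 4 * n * a + 14 * n + a ^ 2 + 9 * a + 17) * summand a (n + 2) k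
        + (3 * n + 5 + 2 * a) * (n + 2 + a) * summand a (n + 1) k
        - (n + 2 + a) * (n + 1 + a) * summand a n k
      = summandCertificate a n (k + 1) - summandCertificate a n k := by
  have h0 := summand_eq_mul_summand_succ_left ha n k
  have h1 := summand_eq_mul_summand_succ_left ha (n + 1) k
  have h2 := summand_eq_mul_summand_succ_left ha (n + 2) k
  have h3 := summand_succ_right_eq_mul_summand ha (n + 3) k
  rw [show n + 2 + 1 = n + 3 from rfl] at h2
  rw [summandCertificate, summandCertificate, h3, h0, h1, h2]
  have hn1 : (n : ℝ) + a + 1 ≠ 0 := ne_zero_of_eq_natCast_add ha (n + 1) (by push_cast; ring)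
  have hn2 : (n : ℝ) + 1 + a + 1 ≠ 0 := ne_zero_of_eq_natCast_add ha (n + 2) (by push_cast; ring)
  have hn3 : (n : ℝ) + 2 + a + 1 ≠ 0 := ne_zero_of_eq_natCast_add ha (n + 3) (by push_cast; ring)
  have hn3' : (n : ℝ) + 3 + a ≠ 0 := ne_zero_of_eq_natCast_add ha (n + 3) (by push_cast; ring)
  have hk1 : (k : ℝ) + 1 + a ≠ 0 := ne_zero_of_eq_natCast_add ha (k + 1) (by push_cast; ring)
  push_cast
  generalize summand a (n + 3) k = T
  field_simp
  ring

lemma sum_summand_recurrence (n : ℕ) :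
    (n + 3) * (n + 3 + a) * ∑ k ∈ range (n + 4), summand a (n + 3) k
        - (3 * n ^ 2 + 4 * n * a + 14 * n + a ^ 2 + 9 * a + 17)
          * ∑ k ∈ range (n + 4), summand a (n + 2) k
        + (3 * n + 5 + 2 * a) * (n + 2 + a) * ∑ k ∈ range (n + 4), summand a (n + 1) k
        - (n + 2 + a) * (n + 1 + a) * ∑ k ∈ range (n + 4), summand a n k = 0 := by
  simp only [mul_sum, ← sum_sub_distrib, ← sum_add_distrib,
    summand_recurrence_eq_certificate_sub ha, sum_range_sub]
  simp [summandCertificate, summand_eq_zero_of_lt]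

end Recurrence

section InitialValues

variable {α : ℚ} (hα : ∀ m : ℕ, (α : ℝ) ≠ -m)
include hα

lemma gammaApprox_zero : gammaApprox α 0 = 1 / (α : ℝ) := by
  simp [gammaApprox, genBinom, Gamma_add_one_ne_zero hα]

lemma gammaApprox_one :
    gammaApprox α 1 = (1 + (α : ℝ) + (α : ℝ) ^ 2) / ((α : ℝ) * ((α : ℝ) + 1)) := by
  have h0 : (α : ℝ) ≠ 0 := ne_zero_of_eq_natCast_add hα 0 (by simp)
  have h1 : 1 + (α : ℝ) ≠ 0 := ne_zero_of_eq_natCast_add hα 1 (by simp)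
  have hΓ := Gamma_add_one_ne_zero hα
  simp only [gammaApprox, genBinom, sum_range_succ, sum_range_zero]
  norm_num [Gamma_one_add_add_one hα]
  field_simp
  ring

lemma gammaApprox_two :
    gammaApprox α 2 = (4 + 5 * (α : ℝ) + 6 * (α : ℝ) ^ 2 + 4 * (α : ℝ) ^ 3 + (α : ℝ) ^ 4) /
      (2 * (α : ℝ) * ((α : ℝ) + 1) * ((α : ℝ) + 2)) := by
  have h0 : (α : ℝ) ≠ 0 := ne_zero_of_eq_natCast_add hα 0 (by simp)
  have h1 : 1 + (α : ℝ) ≠ 0 := ne_zero_of_eq_natCast_add hα 1 (by simp)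
  have h2 : 2 + (α : ℝ) ≠ 0 := ne_zero_of_eq_natCast_add hα 2 (by simp)
  have hΓ := Gamma_add_one_ne_zero hα
  simp only [gammaApprox, genBinom, sum_range_succ, sum_range_zero]
  norm_num [Gamma_one_add_add_one hα, Gamma_two_add_add_one hα]
  field_simp
  ring

end InitialValues

/-- Initial values and third-order linear recurrence for `P_n(α)`. -/
theorem gammaApprox_recurrence (α : ℚ) (hα : ∀ m : ℕ, α ≠ -(m : ℚ)) :
    gammaApprox α 0 = 1 / (α : ℝ) ∧
    gammaApprox α 1 = (1 + (α : ℝ) + (α : ℝ) ^ 2) / ((α : ℝ) * ((α : ℝ) + 1)) ∧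
    gammaApprox α 2 = (4 + 5 * (α : ℝ) + 6 * (α : ℝ) ^ 2 + 4 * (α : ℝ) ^ 3 + (α : ℝ) ^ 4) /
      (2 * (α : ℝ) * ((α : ℝ) + 1) * ((α : ℝ) + 2)) ∧
    ∀ n : ℕ,
      ((n : ℝ) + 3) * ((n : ℝ) + 3 + (α : ℝ)) * gammaApprox α (n + 3)
        - (3 * (n : ℝ) ^ 2 + 4 * (n : ℝ) * (α : ℝ) + 14 * (n : ℝ) + (α : ℝ) ^ 2
            + 9 * (α : ℝ) + 17) * gammaApprox α (n + 2)
        + (3 * (n : ℝ) + 5 + 2 * (α : ℝ)) * ((n : ℝ) + 2 + (α : ℝ)) * gammaApprox α (n + 1)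
        - ((n : ℝ) + 2 + (α : ℝ)) * ((n : ℝ) + 1 + (α : ℝ)) * gammaApprox α n = 0 := by
  have ha : ∀ m : ℕ, (α : ℝ) ≠ -m := fun m h => hα m (by exact_mod_cast h)
  refine ⟨gammaApprox_zero ha, gammaApprox_one ha, gammaApprox_two ha, fun n => ?_⟩
  rw [gammaApprox_eq_sum_summand α (show n + 3 < n + 4 by omega),
    gammaApprox_eq_sum_summand α (show n + 2 < n + 4 by omega),
    gammaApprox_eq_sum_summand α (show n + 1 < n + 4 by omega),
    gammaApprox_eq_sum_summand α (show n < n + 4 by omega)]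
  exact sum_summand_recurrence ha n
end

section
/- Let α be a rational number that is not a nonpositive integer, and let E_α(z) = Σ_{k=0}^∞ z^k/(k!(k+α)). Then x^α · E_α(−x) converges to Γ(α) as the real number x tends to +∞. -/
/-!
For `a > 0`, expanding `exp (z * t)` and integrating term by term gives
`E_a(z) = ∫₀¹ t^(a-1) e^(zt) dt`, so the substitution `s = x t` turns `x^a E_a(-x)` into the
partial Gamma integral `∫₀ˣ e^(-s) s^(a-1) ds`, which tends to `Γ(a)`. For the other admissible
`a` the recurrence `a E_a(z) + z E_(a+1)(z) = e^z` expresses `x^a E_a(-x)` through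
`x^(a+1) E_(a+1)(-x)` and the negligible term `x^a e^(-x)`, and `Γ(a+1) = a Γ(a)` carries
the limit down one step at a time.
-/

/-- The E-function `E_α(z) = ∑_{k=0}^∞ z^k/(k!(k+α))`. -/
noncomputable def Ealpha (α : ℚ) (z : ℝ) : ℝ :=
  ∑' k : ℕ, z ^ k / ((Nat.factorial k : ℝ) * ((k : ℝ) + (α : ℝ)))

open Filter MeasureTheory Set Real Topology Nat

noncomputable def EalphaReal (a : ℝ) (z : ℝ) : ℝ :=
  ∑' k : ℕ, z ^ k / ((k ! : ℝ) * ((k : ℝ) + a))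

lemma summable_pow_div_factorial_mul_add (a z : ℝ) :
    Summable fun k : ℕ => z ^ k / ((k ! : ℝ) * ((k : ℝ) + a)) := by
  refine Summable.of_norm_bounded_eventually_nat (Real.summable_pow_div_factorial |z|) ?_
  have h : ∀ᶠ k : ℕ in atTop, 1 ≤ (k : ℝ) + a :=
    tendsto_atTop.1 (tendsto_atTop_add_const_right _ a tendsto_natCast_atTop_atTop) 1
  filter_upwards [h] with k hk
  rw [norm_div, norm_mul, norm_pow, Real.norm_natCast, Real.norm_eq_abs, Real.norm_eq_abs,
    abs_of_pos (by linarith : (0 : ℝ) < k + a), ← div_div]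
  exact div_le_self (by positivity) hk

lemma mul_EalphaReal_add_mul_EalphaReal_add_one {a : ℝ} (ha : ∀ k : ℕ, (k : ℝ) + a ≠ 0)
    (z : ℝ) :
    a * EalphaReal a z + z * EalphaReal (a + 1) z = exp z := by
  have hterm : ∀ k : ℕ, a * (z ^ (k + 1) / (((k + 1) ! : ℝ) * (((k + 1 : ℕ) : ℝ) + a))) +
      z * (z ^ k / ((k ! : ℝ) * ((k : ℝ) + (a + 1)))) = z ^ (k + 1) / (k + 1) ! := by
    intro k
    have h := ha (k + 1)
    push_cast at h ⊢
    rw [Nat.factorial_succ, show (k : ℝ) + (a + 1) = k + 1 + a by ring]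
    push_cast
    field_simp
    ring
  have htail := (hasSum_nat_add_iff' 1).2 (summable_pow_div_factorial_mul_add a z).hasSum
  have hexp := (hasSum_nat_add_iff' 1).2
    (Real.exp_eq_exp_ℝ ▸ NormedSpace.expSeries_div_hasSum_exp z : HasSum _ (exp z))
  rw [Finset.sum_range_one] at htail hexp
  have hsum := funext hterm ▸ (htail.mul_left a).add
    ((summable_pow_div_factorial_mul_add (a + 1) z).hasSum.mul_left z)
  have h0 : a * (z ^ 0 / ((0 ! : ℝ) * ((0 : ℕ) + a))) = z ^ 0 / (0 ! : ℕ) := by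
    simpa using mul_inv_cancel₀ (by simpa using ha 0)
  rw [EalphaReal, EalphaReal]
  linear_combination hsum.unique hexp + h0

lemma EalphaReal_eq_integral {a : ℝ} (ha : 0 < a) (z : ℝ) :
    EalphaReal a z = ∫ t in (0 : ℝ)..1, t ^ (a - 1) * exp (z * t) := by
  have hpos : ∀ k : ℕ, 0 < (k : ℝ) + a := fun k => by positivity
  let F : ℝ → ℕ → ℝ → ℝ := fun w k t => w ^ k / k ! * t ^ ((k : ℝ) + a - 1)
  have hmoment : ∀ k : ℕ,
      ∫ t in Ioc (0 : ℝ) 1, t ^ ((k : ℝ) + a - 1) = 1 / ((k : ℝ) + a) := by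
    intro k
    rw [← intervalIntegral.integral_of_le zero_le_one,
      integral_rpow (Or.inl (by linarith [hpos k])), sub_add_cancel, one_rpow,
      zero_rpow (hpos k).ne', sub_zero]
  have hint : ∀ w k, Integrable (F w k) (volume.restrict (Ioc 0 1)) := fun w k => by
    refine Integrable.const_mul ?_ _
    rw [← IntegrableOn, ← intervalIntegrable_iff_integrableOn_Ioc_of_le zero_le_one]
    exact intervalIntegral.intervalIntegrable_rpow' (by linarith [hpos k])
  have hintegral : ∀ w k,
      ∫ t in Ioc (0 : ℝ) 1, F w k t = w ^ k / (k ! * ((k : ℝ) + a)) := by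
    intro w k
    rw [integral_const_mul, hmoment]
    field_simp
  have hnorm : ∀ k,
      ∫ t in Ioc (0 : ℝ) 1, ‖F z k t‖ = ∫ t in Ioc (0 : ℝ) 1, F |z| k t := by
    intro k
    refine setIntegral_congr_fun measurableSet_Ioc fun t ht => ?_
    simp only [F, norm_mul, norm_div, norm_pow, Real.norm_eq_abs, Nat.abs_cast,
      abs_of_nonneg (rpow_nonneg ht.1.le _)]
  have hseries : ∀ t ∈ Ioc (0 : ℝ) 1, ∑' k, F z k t = t ^ (a - 1) * exp (z * t) := by
    intro t ht
    have hsplit : ∀ k : ℕ, F z k t = (z * t) ^ k / k ! * t ^ (a - 1) := fun k => by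
      rw [show F z k t = z ^ k / k ! * t ^ ((k : ℝ) + (a - 1)) by simp only [F, add_sub_assoc],
        rpow_add ht.1, rpow_natCast, mul_pow]
      ring
    rw [tsum_congr hsplit, tsum_mul_right, Real.exp_eq_exp_ℝ, NormedSpace.exp_eq_tsum_div,
      mul_comm]
  rw [intervalIntegral.integral_of_le zero_le_one,
    ← setIntegral_congr_fun measurableSet_Ioc hseries,
    ← integral_tsum_of_summable_integral_norm (hint z) ?_, EalphaReal]
  · exact tsum_congr fun k => (hintegral z k).symm
  · simpa only [hnorm, hintegral] using summable_pow_div_factorial_mul_add a |z|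

lemma rpow_mul_EalphaReal_neg_eq_integral {a : ℝ} (ha : 0 < a) {x : ℝ} (hx : 0 < x) :
    x ^ a * EalphaReal a (-x) = ∫ s in (0 : ℝ)..x, exp (-s) * s ^ (a - 1) := by
  have hsubst := intervalIntegral.integral_comp_mul_left (a := 0) (b := 1)
    (fun s => exp (-s) * s ^ (a - 1)) hx.ne'
  rw [mul_zero, mul_one] at hsubst
  have hintegrand : ∀ t ∈ uIcc (0 : ℝ) 1,
      exp (-(x * t)) * (x * t) ^ (a - 1) = x ^ (a - 1) * (t ^ (a - 1) * exp (-x * t)) := by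
    intro t ht
    rw [uIcc_of_le zero_le_one] at ht
    rw [mul_rpow hx.le ht.1, neg_mul]
    ring
  rw [intervalIntegral.integral_congr hintegrand, intervalIntegral.integral_const_mul,
    ← EalphaReal_eq_integral ha, smul_eq_mul, eq_inv_mul_iff_mul_eq₀ hx.ne'] at hsubst
  rw [← hsubst, ← mul_assoc, ← rpow_one_add' hx.le (by linarith), add_sub_cancel]

lemma tendsto_rpow_mul_EalphaReal_neg_of_pos {a : ℝ} (ha : 0 < a) :
    Tendsto (fun x : ℝ => x ^ a * EalphaReal a (-x)) atTop (𝓝 (Gamma a)) := by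
  refine Tendsto.congr' ?_ (Gamma_eq_integral ha ▸
    intervalIntegral_tendsto_integral_Ioi 0 (GammaIntegral_convergent ha) tendsto_id)
  filter_upwards [eventually_gt_atTop 0] with x hx
  exact (rpow_mul_EalphaReal_neg_eq_integral ha hx).symm

lemma tendsto_rpow_mul_EalphaReal_neg_of_add_one {a : ℝ} (ha : ∀ k : ℕ, (k : ℝ) + a ≠ 0)
    (h : Tendsto (fun x : ℝ => x ^ (a + 1) * EalphaReal (a + 1) (-x)) atTop
      (𝓝 (Gamma (a + 1)))) :
    Tendsto (fun x : ℝ => x ^ a * EalphaReal a (-x)) atTop (𝓝 (Gamma a)) := by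
  have ha0 : a ≠ 0 := by simpa using ha 0
  have hrec : ∀ x : ℝ, 0 < x →
      (x ^ a * exp (-x) + x ^ (a + 1) * EalphaReal (a + 1) (-x)) / a =
        x ^ a * EalphaReal a (-x) := by
    intro x hx
    have := mul_EalphaReal_add_mul_EalphaReal_add_one ha (-x)
    rw [rpow_add_one hx.ne', div_eq_iff ha0]
    linear_combination (-x ^ a) * this
  have hdecay : Tendsto (fun x : ℝ => x ^ a * exp (-x)) atTop (𝓝 0) := by
    simpa using tendsto_rpow_mul_exp_neg_mul_atTop_nhds_zero a 1 one_pos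
  have hlim := (hdecay.add h).div_const a
  rw [zero_add, Gamma_add_one ha0, mul_div_cancel_left₀ _ ha0] at hlim
  exact hlim.congr' (eventually_gt_atTop 0 |>.mono hrec)

lemma tendsto_rpow_mul_EalphaReal_neg {a : ℝ} (ha : ∀ m : ℕ, a ≠ -(m : ℝ)) :
    Tendsto (fun x : ℝ => x ^ a * EalphaReal a (-x)) atTop (𝓝 (Gamma a)) := by
  obtain ⟨n, hn⟩ := exists_nat_gt (-a)
  induction n generalizing a with
  | zero => exact tendsto_rpow_mul_EalphaReal_neg_of_pos (by simpa using hn)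
  | succ n ih =>
    refine tendsto_rpow_mul_EalphaReal_neg_of_add_one (fun k hk => ha k (by linarith)) ?_
    refine ih (fun m hm => ha (m + 1) ?_) (by push_cast at hn; linarith)
    push_cast
    linarith

/-- `x^α E_α(−x) → Γ(α)` as the real number `x → +∞`. -/
theorem rpow_mul_Ealpha_tendsto_Gamma (α : ℚ) (hα : ∀ m : ℕ, α ≠ -(m : ℚ)) :
    Filter.Tendsto (fun x : ℝ => x ^ (α : ℝ) * Ealpha α (-x)) Filter.atTop
      (nhds (Real.Gamma (α : ℝ))) :=
  tendsto_rpow_mul_EalphaReal_neg fun m hm => hα m (by exact_mod_cast hm)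
end

section
/- Let P_n = Σ_{k=1}^n (−1)^k · C(n,k) · (1/k) · (1 − 1/k!). Then P_0 = 0, P_1 = 0, P_2 = 1/4, and for every n ≥ 0: (n+3)²·P_{n+3} − (3n²+14n+17)·P_{n+2} + (n+2)(3n+5)·P_{n+1} − (n+1)(n+2)·P_n = 0. -/
/-!
Creative telescoping. With `F(m, k)` the summand of `P_m` and the certificate `G = gammaCert`
(found by Zeilberger's algorithm), the recurrence operator applied to `F(·, k)` equals
`G(n, k+1) - G(n, k)`; this is a rational-function identity once every binomial coefficient is
written as a rational multiple of `C(n+3, k)`. Summing over `0 ≤ k ≤ n+3` (the `k = 0` term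
vanishes because `1 - 1/0! = 0`) telescopes to `G(n, n+4) - G(n, 0) = 0`.
-/

/-- `P_n = ∑_{k=1}^n (−1)^k C(n,k) (1/k)(1 − 1/k!)`. -/
noncomputable def gammaSeq (n : ℕ) : ℝ :=
  ∑ k ∈ Finset.Icc 1 n,
    (-1 : ℝ) ^ k * (Nat.choose n k : ℝ) * (1 / (k : ℝ)) * (1 - 1 / (Nat.factorial k : ℝ))

open Finset Nat

theorem Nat.cast_choose_mul_succ {R : Type*} [CommRing R] (m k : ℕ) :
    (m.choose k : R) * (m + 1) = ((m + 1).choose k : R) * (m + 1 - k) := by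
  rcases le_or_gt k (m + 1) with h | h
  · exact_mod_cast congrArg (Nat.cast : ℕ → R) (choose_mul_succ_eq m k) |>.trans
      (by push_cast [Nat.cast_sub h]; ring)
  · simp [choose_eq_zero_of_lt h, choose_eq_zero_of_lt (show m < k by omega)]

theorem Nat.cast_choose_succ_right_mul {R : Type*} [CommRing R] (m k : ℕ) :
    (m.choose (k + 1) : R) * (k + 1) = (m.choose k : R) * (m - k) := by
  rcases le_or_gt k m with h | h
  · exact_mod_cast congrArg (Nat.cast : ℕ → R) (choose_succ_right_eq m k) |>.trans
      (by push_cast [Nat.cast_sub h]; ring)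
  · simp [choose_eq_zero_of_lt h, choose_eq_zero_of_lt (show m < k + 1 by omega)]

theorem Nat.cast_choose_eq_mul_div {K : Type*} [Field K] [CharZero K] (m k : ℕ) :
    (m.choose k : K) = ((m + 1).choose k : K) * (m + 1 - k) / (m + 1) := by
  rw [eq_div_iff (cast_add_one_ne_zero m), cast_choose_mul_succ]

theorem Nat.cast_choose_succ_right_eq_mul_div {K : Type*} [Field K] [CharZero K] (m k : ℕ) :
    (m.choose (k + 1) : K) = (m.choose k : K) * (m - k) / (k + 1) := by
  rw [eq_div_iff (cast_add_one_ne_zero k), cast_choose_succ_right_mul]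

noncomputable def gammaTerm (m k : ℕ) : ℝ :=
  (-1 : ℝ) ^ k * (m.choose k : ℝ) * (1 / (k : ℝ)) * (1 - 1 / (k ! : ℝ))

theorem gammaTerm_zero_right (m : ℕ) : gammaTerm m 0 = 0 := by
  simp [gammaTerm]

theorem gammaTerm_of_lt {m k : ℕ} (h : m < k) : gammaTerm m k = 0 := by
  simp [gammaTerm, choose_eq_zero_of_lt h]

theorem gammaSeq_eq_sum_range {m N : ℕ} (h : m < N) :
    gammaSeq m = ∑ k ∈ range N, gammaTerm m k := by
  refine sum_subset (fun k hk => by simp only [mem_Icc, mem_range] at hk ⊢; omega)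
    fun k _ hk => ?_
  rcases Nat.eq_zero_or_pos k with rfl | hk0
  · exact gammaTerm_zero_right m
  · exact gammaTerm_of_lt (by simp only [mem_Icc, not_and, not_le] at hk; exact hk hk0)

noncomputable def gammaCert (n k : ℕ) : ℝ :=
  (-1 : ℝ) ^ k * ((n + 3).choose k : ℝ) * k * ((n + 1) * k / (k ! : ℝ) - (k ^ 2 - 3 * k + n + 3))
    / ((n + 1) * (n + 3))

theorem gammaCert_zero_right (n : ℕ) : gammaCert n 0 = 0 := by
  simp [gammaCert]

theorem gammaCert_one_right (n : ℕ) : gammaCert n 1 = 0 := by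
  simp only [gammaCert, cast_one, factorial_one]
  ring

theorem gammaCert_of_lt {n k : ℕ} (h : n + 3 < k) : gammaCert n k = 0 := by
  simp [gammaCert, choose_eq_zero_of_lt h]

theorem gammaTerm_recurrence (n k : ℕ) :
    ((n : ℝ) + 3) ^ 2 * gammaTerm (n + 3) k
      - (3 * (n : ℝ) ^ 2 + 14 * (n : ℝ) + 17) * gammaTerm (n + 2) k
      + ((n : ℝ) + 2) * (3 * (n : ℝ) + 5) * gammaTerm (n + 1) k
      - ((n : ℝ) + 1) * ((n : ℝ) + 2) * gammaTerm n k
      = gammaCert n (k + 1) - gammaCert n k := by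
  rcases Nat.eq_zero_or_pos k with rfl | hk
  · simp [gammaTerm_zero_right, gammaCert_zero_right, gammaCert_one_right]
  have hk : (k : ℝ) ≠ 0 := by positivity
  simp only [gammaTerm, gammaCert, cast_choose_eq_mul_div n, cast_choose_eq_mul_div (n + 1),
    cast_choose_eq_mul_div (n + 2), cast_choose_succ_right_eq_mul_div (n + 3), factorial_succ]
  push_cast
  field_simp
  ring

/-- Initial values and third-order linear recurrence for `P_n`. -/
theorem gammaSeq_recurrence :
    gammaSeq 0 = 0 ∧ gammaSeq 1 = 0 ∧ gammaSeq 2 = 1 / 4 ∧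
    ∀ n : ℕ,
      ((n : ℝ) + 3) ^ 2 * gammaSeq (n + 3)
        - (3 * (n : ℝ) ^ 2 + 14 * (n : ℝ) + 17) * gammaSeq (n + 2)
        + ((n : ℝ) + 2) * (3 * (n : ℝ) + 5) * gammaSeq (n + 1)
        - ((n : ℝ) + 1) * ((n : ℝ) + 2) * gammaSeq n = 0 := by
  refine ⟨by simp [gammaSeq], by simp [gammaSeq], ?_, fun n => ?_⟩
  · rw [gammaSeq_eq_sum_range (show 2 < 3 by norm_num)]
    norm_num [sum_range_succ, gammaTerm]
  · rw [gammaSeq_eq_sum_range (show n + 3 < n + 4 by omega),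
      gammaSeq_eq_sum_range (show n + 2 < n + 4 by omega),
      gammaSeq_eq_sum_range (show n + 1 < n + 4 by omega),
      gammaSeq_eq_sum_range (show n < n + 4 by omega)]
    simp only [mul_sum, ← sum_sub_distrib, ← sum_add_distrib, gammaTerm_recurrence]
    rw [sum_range_sub, gammaCert_of_lt (by omega), gammaCert_zero_right, sub_zero]
end

section
/- Define sequences of integers (U_k) and (V_k) by U_0 = 0, U_1 = 1, V_0 = 1, V_1 = 0, and X_{k+1} = k·X_k + X_{k−1} for k ≥ 1 (for X = U and X = V). Then U_k/V_k converges, as k → ∞, to (Σ_{n=0}^∞ 1/(n!)²) / (Σ_{n=0}^∞ 1/(n!·(n+1)!)). -/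
/-!
Write `B k = ∑ₙ 1 / (n! (n + k)!)` (the value `I_k(2)` of the modified Bessel function).
Splitting `n + k + 1` as `(k + 1) + n` in the denominators gives `B k = (k + 1) B (k + 1) + B (k + 2)`,
so `(-1)ᵏ B k` satisfies the same recurrence as `U` and `V`, and comparing initial values
`(-1)ᵏ B k = V k · B 0 - U k · B 1`. Since `B k ≤ B 0 / k!` tends to `0` and `V k ≥ 1` for `k ≥ 2`,
`U k / V k - B 0 / B 1 = -(-1)ᵏ B k / (V k · B 1)` tends to `0`.
-/

open Filter Topology Nat

section Recurrence

variable {R : Type*}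

/-- `X (k + 1) = k * X k + X (k - 1)` shifted by one, so that no truncated `k - 1` occurs. -/
def SatisfiesRecurrence [Semiring R] (X : ℕ → R) : Prop :=
  ∀ k : ℕ, X (k + 2) = ((k : R) + 1) * X (k + 1) + X k

namespace SatisfiesRecurrence

theorem eq_of_eq_of_eq [Semiring R] {X Y : ℕ → R} (hX : SatisfiesRecurrence X)
    (hY : SatisfiesRecurrence Y) (h0 : X 0 = Y 0) (h1 : X 1 = Y 1) : X = Y := by
  have h : ∀ k, X k = Y k ∧ X (k + 1) = Y (k + 1) := by
    intro k
    induction k with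
    | zero => exact ⟨h0, h1⟩
    | succ k ih => exact ⟨ih.2, by rw [hX, hY, ih.1, ih.2]⟩
  exact funext fun k => (h k).1

theorem map {S : Type*} [Semiring R] [Semiring S] {X : ℕ → R} (hX : SatisfiesRecurrence X)
    (f : R →+* S) : SatisfiesRecurrence (fun k => f (X k)) := fun k => by
  dsimp only
  rw [hX k, map_add, map_mul, map_add, map_natCast, map_one]

theorem mul_const_sub_mul_const [CommRing R] {X Y : ℕ → R} (hX : SatisfiesRecurrence X)
    (hY : SatisfiesRecurrence Y) (a b : R) :
    SatisfiesRecurrence (fun k => X k * a - Y k * b) := fun k => by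
  dsimp only
  rw [hX, hY]
  ring

theorem nonneg [Semiring R] [PartialOrder R] [IsOrderedRing R] {X : ℕ → R}
    (hX : SatisfiesRecurrence X) (h0 : 0 ≤ X 0) (h1 : 0 ≤ X 1) (k : ℕ) : 0 ≤ X k := by
  have h : ∀ k, 0 ≤ X k ∧ 0 ≤ X (k + 1) := by
    intro k
    induction k with
    | zero => exact ⟨h0, h1⟩
    | succ k ih => exact ⟨ih.2, by rw [hX]; exact add_nonneg (mul_nonneg (add_nonneg k.cast_nonneg zero_le_one) ih.2) ih.1⟩
  exact (h k).1

theorem le_add_two [Semiring R] [PartialOrder R] [IsOrderedRing R] {X : ℕ → R}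
    (hX : SatisfiesRecurrence X) (h0 : 0 ≤ X 0) (h1 : 0 ≤ X 1) (k : ℕ) :
    X (k + 1) ≤ X (k + 2) := by
  rw [hX]
  have hk : X (k + 1) ≤ ((k : R) + 1) * X (k + 1) :=
    le_mul_of_one_le_left (hX.nonneg h0 h1 _) (le_add_of_nonneg_left k.cast_nonneg)
  exact le_add_of_le_of_nonneg hk (hX.nonneg h0 h1 k)

end SatisfiesRecurrence

end Recurrence

noncomputable def besselTwo (k : ℕ) : ℝ :=
  ∑' n : ℕ, 1 / ((n ! : ℝ) * ((n + k)! : ℝ))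

theorem one_div_factorial_mul_factorial_add_le (n k : ℕ) :
    1 / ((n ! : ℝ) * ((n + k)! : ℝ)) ≤ 1 / ((n ! : ℝ) * (n ! : ℝ)) * (1 / (k ! : ℝ)) := by
  rw [one_div_mul_one_div, mul_assoc]
  gcongr
  exact_mod_cast Nat.le_of_dvd (factorial_pos _) (factorial_mul_factorial_dvd_factorial_add n k)

theorem summable_one_div_factorial_mul_factorial_add (k : ℕ) :
    Summable (fun n : ℕ => 1 / ((n ! : ℝ) * ((n + k)! : ℝ))) := by
  have h : Summable (fun n : ℕ => 1 / (n ! : ℝ)) := by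
    simpa using Real.summable_pow_div_factorial 1
  refine h.of_nonneg_of_le (fun n => by positivity) fun n => ?_
  gcongr
  exact le_mul_of_one_le_right (by positivity) (Nat.one_le_cast.mpr (factorial_pos _))

theorem besselTwo_hasSum (k : ℕ) :
    HasSum (fun n : ℕ => 1 / ((n ! : ℝ) * ((n + k)! : ℝ))) (besselTwo k) :=
  (summable_one_div_factorial_mul_factorial_add k).hasSum

theorem besselTwo_pos (k : ℕ) : 0 < besselTwo k :=
  (summable_one_div_factorial_mul_factorial_add k).tsum_pos (fun n => by positivity) 0
    (by positivity)

theorem besselTwo_le (k : ℕ) : besselTwo k ≤ besselTwo 0 * (1 / (k ! : ℝ)) := by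
  refine hasSum_le (fun n => ?_) (besselTwo_hasSum k) ((besselTwo_hasSum 0).mul_right _)
  simpa using one_div_factorial_mul_factorial_add_le n k

theorem tendsto_besselTwo_zero : Tendsto besselTwo atTop (𝓝 0) := by
  have h : Tendsto (fun k : ℕ => 1 / (k ! : ℝ)) atTop (𝓝 0) := by
    simpa using (Real.summable_pow_div_factorial 1).tendsto_atTop_zero
  refine squeeze_zero (fun k => (besselTwo_pos k).le) besselTwo_le ?_
  simpa using h.const_mul (besselTwo 0)

theorem hasSum_natCast_div_factorial_mul_factorial_add (k : ℕ) :
    HasSum (fun n : ℕ => (n : ℝ) / ((n ! : ℝ) * ((n + (k + 1))! : ℝ))) (besselTwo (k + 2)) := by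
  rw [← hasSum_nat_add_iff' 1]
  simp only [Finset.sum_range_one, CharP.cast_eq_zero, zero_div, sub_zero]
  refine (besselTwo_hasSum (k + 2)).congr_fun fun n => ?_
  rw [show n + 1 + (k + 1) = n + (k + 2) by ring, factorial_succ]
  push_cast
  field_simp

theorem besselTwo_eq (k : ℕ) :
    besselTwo k = (k + 1) * besselTwo (k + 1) + besselTwo (k + 2) := by
  refine (besselTwo_hasSum k).unique ?_
  refine (((besselTwo_hasSum (k + 1)).mul_left _).add
    (hasSum_natCast_div_factorial_mul_factorial_add k)).congr_fun fun n => ?_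
  rw [show n + (k + 1) = n + k + 1 by ring, factorial_succ]
  push_cast
  field_simp
  ring

theorem satisfiesRecurrence_neg_one_pow_mul_besselTwo :
    SatisfiesRecurrence (fun k => (-1 : ℝ) ^ k * besselTwo k) := fun k => by
  simp only [besselTwo_eq k, pow_succ]
  ring

theorem tendsto_div_of_tendsto_mul_sub_mul {u v : ℕ → ℝ} {a b : ℝ} (hb : b ≠ 0)
    (hv : ∀ᶠ k in atTop, 1 ≤ v k) (h : Tendsto (fun k => v k * a - u k * b) atTop (𝓝 0)) :
    Tendsto (fun k => u k / v k) atTop (𝓝 (a / b)) := by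
  rw [← tendsto_sub_nhds_zero_iff]
  have hbound : Tendsto (fun k => |v k * a - u k * b| / |b|) atTop (𝓝 0) := by
    simpa using h.abs.div_const |b|
  refine squeeze_zero_norm' ?_ hbound
  filter_upwards [hv] with k hvk
  have hv0 : v k ≠ 0 := by positivity
  rw [div_sub_div _ _ hv0 hb, norm_div]
  simp only [Real.norm_eq_abs]
  rw [abs_mul, abs_of_pos (by positivity : 0 < v k), ← abs_neg, neg_sub]
  gcongr
  exact le_mul_of_one_le_left (abs_nonneg b) hvk

/-- The convergents `U_k/V_k` of the continued fraction `[0; 1, 2, 3, 4, …]`, where `U, V`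
satisfy `X_{k+1} = k X_k + X_{k−1}` with `U_0 = 0, U_1 = 1, V_0 = 1, V_1 = 0`, converge to
`F(1)/F'(1) = (∑ 1/(n!)²) / (∑ 1/(n!(n+1)!))`. -/
theorem convergents_tendsto_ratio (U V : ℕ → ℤ)
    (hU0 : U 0 = 0) (hU1 : U 1 = 1) (hV0 : V 0 = 1) (hV1 : V 1 = 0)
    (hUrec : ∀ k : ℕ, 1 ≤ k → U (k + 1) = (k : ℤ) * U k + U (k - 1))
    (hVrec : ∀ k : ℕ, 1 ≤ k → V (k + 1) = (k : ℤ) * V k + V (k - 1)) :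
    Filter.Tendsto (fun k : ℕ => (U k : ℝ) / (V k : ℝ)) Filter.atTop
      (nhds ((∑' n : ℕ, 1 / ((Nat.factorial n : ℝ)) ^ 2) /
        (∑' n : ℕ, 1 / ((Nat.factorial n : ℝ) * (Nat.factorial (n + 1) : ℝ))))) := by
  have hU : SatisfiesRecurrence U := fun k => by simpa using hUrec (k + 1) (by omega)
  have hV : SatisfiesRecurrence V := fun k => by simpa using hVrec (k + 1) (by omega)
  have hB0 : ∑' n : ℕ, 1 / ((n ! : ℝ)) ^ 2 = besselTwo 0 := by simp [besselTwo, sq]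
  rw [hB0, ← besselTwo]
  have hkey : (fun k => (V k : ℝ) * besselTwo 0 - U k * besselTwo 1) =
      fun k => (-1 : ℝ) ^ k * besselTwo k :=
    ((hV.map (Int.castRingHom ℝ)).mul_const_sub_mul_const (hU.map (Int.castRingHom ℝ)) _ _
      ).eq_of_eq_of_eq satisfiesRecurrence_neg_one_pow_mul_besselTwo
      (by simp [hU0, hV0]) (by simp [hU1, hV1])
  have hV_ge_one : ∀ᶠ k in atTop, (1 : ℝ) ≤ V k := by
    have hmono : Monotone fun k => V (k + 2) := monotone_nat_of_le_succ fun k =>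
      hV.le_add_two (by simp [hV0]) (by simp [hV1]) (k + 1)
    filter_upwards [eventually_ge_atTop 2] with k hk
    obtain ⟨j, rfl⟩ := Nat.exists_eq_add_of_le' hk
    have h2 : V 2 = 1 := by simp [hV 0, hV0, hV1]
    have h := hmono (Nat.zero_le j)
    simp only [zero_add, h2] at h
    exact_mod_cast h
  refine tendsto_div_of_tendsto_mul_sub_mul (besselTwo_pos 1).ne' hV_ge_one ?_
  rw [hkey, tendsto_zero_iff_norm_tendsto_zero]
  simpa using tendsto_besselTwo_zero.norm
end
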